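/- Let Γ be a uniform layered graph with unique minimal vertex *. Then the defining ideal R of A(Γ) is generated by R_1 ∪ {e(τ_1,2) − e(τ_2,2) : t(τ_1) = t(τ_2), h(τ_1) = h(τ_2), l(τ_1) = l(τ_2) = 2}; in particular R is generated by elements of degree at most 2 and A(Γ) is a quadratic algebra. -/

import Mathlib

noncomputable section

/-- A layered directed graph: vertices come with a rank (layer), and each
edge goes from a vertex of rank `j+1` to a vertex of rank `j`. -/
structure LayeredGraph where
  V : Type
  E : Type
  rank : V → ℕ
  tail : E → V
  head : E → V
  rank_tail : ∀ e, rank (tail e) = rank (head e) + 1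

namespace LayeredGraph

variable (G : LayeredGraph)

/-- `V₀ = {*}`: there is a unique vertex of rank `0`. -/
def HasUniqueMin : Prop := ∃ s : G.V, G.rank s = 0 ∧ ∀ v, G.rank v = 0 → v = s

/-- Every vertex of `V⁺` has at least one outgoing edge. -/
def EdgeFull : Prop := ∀ v, G.rank v ≠ 0 → ∃ e, G.tail e = v

/-- `u` covers `w`: there is an edge from `u` to `w`. -/
def adj (u w : G.V) : Prop := ∃ e, G.tail e = u ∧ G.head e = w

/-- `v ≥ u` with a prescribed rank drop `j` (this is `u ∈ S_j(v)`;
for `j = 0` it forces `u = v`). -/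
def SRel (v u : G.V) (j : ℕ) : Prop :=
  Relation.ReflTransGen G.adj v u ∧ G.rank u + j = G.rank v

/-- A uniform layered graph: for each vertex `v` of rank `≥ 2`, all elements of
`S₁(v)` are equivalent under the equivalence relation generated by
`u ∼ w ↔ S₁(u) ∩ S₁(w) ≠ ∅`. -/
def Uniform : Prop := ∀ v u w, 2 ≤ G.rank v → G.adj v u → G.adj v w →
  Relation.EqvGen (fun a b => G.adj v a ∧ G.adj v b ∧ ∃ x, G.adj a x ∧ G.adj b x) u w

/-- A (nonempty) directed path: a nonempty list of composable edges. -/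
def IsPathList (l : List G.E) : Prop :=
  l ≠ [] ∧ l.Chain' (fun e f => G.head e = G.tail f)

/-- The tail (initial vertex) of a path, as an `Option`. -/
def firstV (l : List G.E) : Option G.V := l.head?.map G.tail

/-- The head (final vertex) of a path, as an `Option`. -/
def lastV (l : List G.E) : Option G.V := l.getLast?.map G.head

/-- The list `v₀, v₁, …, v_m` of vertices visited by a path. -/
def pathVerts (l : List G.E) : List G.V :=
  match l with
  | [] => []
  | e :: _ => G.tail e :: l.map G.head

/-- The type `V⁺` of vertices of positive rank. -/
def Vp := {v : G.V // G.rank v ≠ 0}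

variable (F : Type) [Field F]

/-- The coefficient `e(π,k)` of `t^k` in `P_π(t) = (1 - te₁)⋯(1 - te_m)`,
an element of the tensor algebra `T(E)` (modelled as the free algebra on `E`). -/
def ecoef (π : List G.E) (k : ℕ) : FreeAlgebra F G.E :=
  ((-1 : F) ^ k) • ((π.sublistsLen k).map fun l => (l.map (FreeAlgebra.ι F)).prod).sum

/-- The two-sided ideal generated by a set, as a submodule. -/
def twoSidedSpan {A : Type} [Ring A] [Algebra F A] (S : Set A) : Submodule F A :=
  Submodule.span F {x | ∃ a s b, s ∈ S ∧ x = a * s * b}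

/-- The defining ideal `R` of `A(Γ)`, generated by the differences
`e(π₁,k) - e(π₂,k)` over pairs of paths with the same tail and the same head. -/
def Rideal : Submodule F (FreeAlgebra F G.E) :=
  twoSidedSpan F {x | ∃ π₁ π₂ k, G.IsPathList π₁ ∧ G.IsPathList π₂ ∧
    G.firstV π₁ = G.firstV π₂ ∧ G.lastV π₁ = G.lastV π₂ ∧
    1 ≤ k ∧ k ≤ π₁.length ∧ x = G.ecoef F π₁ k - G.ecoef F π₂ k}

/-- A vertex viewed in `T(V⁺)` (the free algebra on `V⁺`), with `*` sent to `0`. -/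
def vert (v : G.V) : FreeAlgebra F G.Vp :=
  if h : G.rank v = 0 then 0 else FreeAlgebra.ι F (⟨v, h⟩ : G.Vp)

/-- The algebra homomorphism `θ : T(E) → T(V⁺)`, induced by `e ↦ t(e) - h(e)`. -/
def theta : FreeAlgebra F G.E →ₐ[F] FreeAlgebra F G.Vp :=
  FreeAlgebra.lift F fun e => G.vert F (G.tail e) - G.vert F (G.head e)

/-- The filtration `T(E)_i` of `T(E)`, where an edge `e` has degree `|t(e)|`. -/
def filtE (i : ℕ) : Submodule F (FreeAlgebra F G.E) :=
  Submodule.span F {x | ∃ l : List G.E, (l.map fun e => G.rank (G.tail e)).sum ≤ i ∧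
    x = (l.map (FreeAlgebra.ι F)).prod}

/-- The homogeneous component `T(V⁺)_[i]` of `T(V⁺)`,
where a vertex has degree equal to its rank. -/
def homogV (i : ℕ) : Submodule F (FreeAlgebra F G.Vp) :=
  Submodule.span F {x | ∃ l : List G.Vp, (l.map fun p => G.rank p.1).sum = i ∧
    x = (l.map (FreeAlgebra.ι F)).prod}

/-- The filtration `T(V⁺)_i` of `T(V⁺)` induced by the vertex grading. -/
def filtV (i : ℕ) : Submodule F (FreeAlgebra F G.Vp) :=
  Submodule.span F {x | ∃ l : List G.Vp, (l.map fun p => G.rank p.1).sum ≤ i ∧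
    x = (l.map (FreeAlgebra.ι F)).prod}

/-- The associated graded ideal `gr I` of an ideal `I ⊆ T(V⁺)`: its degree-`k`
component is `T(V⁺)_[k] ∩ (T(V⁺)_{k-1} + I)`. -/
def grIdeal (I : Submodule F (FreeAlgebra F G.Vp)) : Submodule F (FreeAlgebra F G.Vp) :=
  ⨆ k, G.homogV F k ⊓ ((⨆ j, ⨆ _ : j < k, G.homogV F j) ⊔ I)

/-- The monomial `v(π,k) = v₀v₁⋯v_{k-1} ∈ T(V⁺)` attached to a path `π`. -/
def vmon (π : List G.E) (k : ℕ) : FreeAlgebra F G.Vp :=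
  (((G.pathVerts π).take k).map (G.vert F)).prod

/-- The ideal `R_gr ⊆ T(V⁺)`, generated by the differences `v(π₁,k) - v(π₂,k)`
over pairs of paths with common tail. -/
def Rgr : Submodule F (FreeAlgebra F G.Vp) :=
  twoSidedSpan F {x | ∃ π₁ π₂ k, G.IsPathList π₁ ∧ G.IsPathList π₂ ∧
    G.firstV π₁ = G.firstV π₂ ∧ 2 ≤ k ∧ k ≤ π₁.length ∧ k ≤ π₂.length ∧
    x = G.vmon F π₁ k - G.vmon F π₂ k}

/-- The degree-one subspace `V = F·V⁺ ⊆ T(V⁺)`. -/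
def Wone : Submodule F (FreeAlgebra F G.Vp) :=
  Submodule.span F (Set.range (FreeAlgebra.ι F))

/-- The quadratic relation space `R` of `gr A(Γ)`,
spanned by the elements `v(u - w)` with `u, w ∈ S₁(v)`. -/
def Rquad : Submodule F (FreeAlgebra F G.Vp) :=
  Submodule.span F {x | ∃ v u w, G.adj v u ∧ G.adj v w ∧
    x = G.vert F v * (G.vert F u - G.vert F w)}

/-- `S_j(v) = span{u : v > u, |u| = |v| - j}` (with `S₀(v) = span{v}`). -/
def Sspan (j : ℕ) (v : G.V) : Submodule F (FreeAlgebra F G.Vp) :=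
  Submodule.span F {x | ∃ u, G.SRel v u j ∧ x = G.vert F u}

/-- `P_j(v) = span{u - w : v > u, v > w, |u| = |w| = |v| - j}`. -/
def Pspan (j : ℕ) (v : G.V) : Submodule F (FreeAlgebra F G.Vp) :=
  Submodule.span F {x | ∃ u w, G.SRel v u j ∧ G.SRel v w j ∧
    x = G.vert F u - G.vert F w}

end LayeredGraph

/-- The elements of the sublattice generated by a family of subspaces. -/
inductive latGen {α : Type*} [Lattice α] (S : Set α) : α → Prop
  | base {x} : x ∈ S → latGen S x
  | inf {x y} : latGen S x → latGen S y → latGen S (x ⊓ y)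
  | sup {x y} : latGen S x → latGen S y → latGen S (x ⊔ y)

/-- A family of elements of a lattice is distributive if the sublattice
it generates is distributive. -/
def IsDistribFamily {α : Type*} [Lattice α] (S : Set α) : Prop :=
  ∀ x y z, latGen S x → latGen S y → latGen S z → x ⊓ (y ⊔ z) = (x ⊓ y) ⊔ (x ⊓ z)

/-- Backelin's criterion: a quadratic algebra `T(V)/(R)` (given by the degree-one
subspace `V` and the relation space `R ⊆ V⊗V` inside the tensor algebra) is Koszul
iff for each `k` the collection of subspaces `V^i R V^(k-i)` generates a
distributive lattice. -/
def IsKoszulQuad (F : Type) [Field F] {A : Type} [Ring A] [Algebra F A]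
    (W R : Submodule F A) : Prop :=
  ∀ k : ℕ, IsDistribFamily {X | ∃ i ≤ k, X = W ^ i * R * W ^ (k - i)}

end


noncomputable section
-- ===================== AUX =====================
namespace LGAux
open LayeredGraph

variable {F : Type} [Field F]

theorem tss_mem {A : Type} [Ring A] [Algebra F A] {S : Set A} {s : A} (hs : s ∈ S) :
    s ∈ twoSidedSpan F S :=
  Submodule.subset_span ⟨1, s, 1, hs, by simp⟩

theorem tss_mul_mem {A : Type} [Ring A] [Algebra F A] {S : Set A} (a b : A) {x : A}
    (hx : x ∈ twoSidedSpan F S) : a * x * b ∈ twoSidedSpan F S := by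
  induction hx using Submodule.span_induction with
  | mem y hy =>
    obtain ⟨c, s, d, hs, rfl⟩ := hy
    exact Submodule.subset_span ⟨a * c, s, d * b, hs, by simp [mul_assoc]⟩
  | zero => simpa using (twoSidedSpan F S).zero_mem
  | add x y _ _ hx hy =>
    simpa [mul_add, add_mul] using (twoSidedSpan F S).add_mem hx hy
  | smul c x _ hx =>
    simpa [mul_smul_comm, smul_mul_assoc] using (twoSidedSpan F S).smul_mem c hx

theorem tss_mul_left {A : Type} [Ring A] [Algebra F A] {S : Set A} (a : A) {x : A}
    (hx : x ∈ twoSidedSpan F S) : a * x ∈ twoSidedSpan F S := by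
  simpa using tss_mul_mem a 1 hx

theorem tss_mul_right {A : Type} [Ring A] [Algebra F A] {S : Set A} (b : A) {x : A}
    (hx : x ∈ twoSidedSpan F S) : x * b ∈ twoSidedSpan F S := by
  simpa using tss_mul_mem 1 b hx

theorem tss_le {A : Type} [Ring A] [Algebra F A] {S : Set A} {I : Submodule F A}
    (hcl : ∀ a b x, x ∈ I → a * x * b ∈ I) (h : ∀ s ∈ S, s ∈ I) :
    twoSidedSpan F S ≤ I := by
  rw [twoSidedSpan, Submodule.span_le]
  rintro x ⟨a, s, b, hs, rfl⟩
  exact hcl a b s (h s hs)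

variable {G : LayeredGraph}

theorem ecoef_zero (l : List G.E) : G.ecoef F l 0 = 1 := by
  simp [ecoef]

theorem ecoef_eq_zero {l : List G.E} {k : ℕ} (h : l.length < k) : G.ecoef F l k = 0 := by
  simp [ecoef, List.sublistsLen_of_length_lt h]

theorem ecoef_cons (e : G.E) (l : List G.E) (k : ℕ) :
    G.ecoef F (e :: l) (k + 1)
      = G.ecoef F l (k + 1) - FreeAlgebra.ι F e * G.ecoef F l k := by
  rw [ecoef, List.sublistsLen_succ_cons, List.map_append, List.sum_append, smul_add]
  congr 1
  rw [List.map_map]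
  have : ((fun l' : List G.E => (l'.map (FreeAlgebra.ι F)).prod) ∘ List.cons e)
      = fun l' : List G.E => FreeAlgebra.ι F e * (l'.map (FreeAlgebra.ι F)).prod := by
    funext s; simp
  rw [this, List.sum_map_mul_left, pow_succ, mul_comm, mul_smul, neg_one_smul,
    ← mul_smul_comm]
  rfl

/-- Polynomial model for `ecoef`. -/
def pgen (G : LayeredGraph) (F : Type) [Field F] (l : List G.E) :
    Polynomial (FreeAlgebra F G.E) :=
  (l.map fun e => 1 - Polynomial.C (FreeAlgebra.ι F e) * Polynomial.X).prod

theorem ecoef_eq_coeff (l : List G.E) (k : ℕ) :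
    G.ecoef F l k = (pgen G F l).coeff k := by
  induction l generalizing k with
  | nil =>
    cases k with
    | zero => simp [ecoef_zero, pgen]
    | succ n => simp [ecoef_eq_zero (by simp : ([] : List G.E).length < n + 1), pgen,
        Polynomial.coeff_one]
  | cons e l ih =>
    have hp : pgen G F (e :: l)
        = pgen G F l - Polynomial.C (FreeAlgebra.ι F e) * (Polynomial.X * pgen G F l) := by
      simp [pgen, sub_mul, mul_assoc]
    cases k with
    | zero =>
      rw [ecoef_zero, hp]
      simp [Polynomial.coeff_sub, Polynomial.coeff_C_mul, Polynomial.mul_coeff_zero,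
        ← ih 0, ecoef_zero]
    | succ n =>
      rw [ecoef_cons, hp]
      simp [Polynomial.coeff_sub, Polynomial.coeff_C_mul, Polynomial.coeff_X_mul, ← ih]

theorem ecoef_append (l₁ l₂ : List G.E) (k : ℕ) :
    G.ecoef F (l₁ ++ l₂) k
      = ∑ j ∈ Finset.range (k + 1), G.ecoef F l₁ j * G.ecoef F l₂ (k - j) := by
  have hp : pgen G F (l₁ ++ l₂) = pgen G F l₁ * pgen G F l₂ := by
    simp [pgen]
  rw [ecoef_eq_coeff, hp, Polynomial.coeff_mul,
    Finset.Nat.sum_antidiagonal_eq_sum_range_succ_mk]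
  simp [← ecoef_eq_coeff]

theorem ecoef_one_mem (l : List G.E) :
    G.ecoef F l 1 ∈ Submodule.span F (Set.range (FreeAlgebra.ι F : G.E → FreeAlgebra F G.E)) := by
  induction l with
  | nil => simpa [ecoef_eq_zero (by simp : ([] : List G.E).length < 1)] using
      (Submodule.span F _).zero_mem
  | cons e l ih =>
    have := ecoef_cons (F := F) e l 0
    rw [zero_add] at this
    rw [this, ecoef_zero, mul_one]
    exact Submodule.sub_mem _ ih (Submodule.subset_span ⟨e, rfl⟩)

theorem rank_first_last {l : List G.E} (hc : l.Chain' (fun e f => G.head e = G.tail f)) :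
    ∀ {e f}, l.head? = some e → l.getLast? = some f →
      G.rank (G.tail e) = G.rank (G.head f) + l.length := by
  induction l with
  | nil => intro e f h; simp at h
  | cons a t ih =>
    intro e f he hf
    rw [List.head?_cons, Option.some.injEq] at he
    subst he
    cases t with
    | nil =>
      simp only [List.getLast?_singleton, Option.some.injEq] at hf
      subst hf
      simpa using G.rank_tail a
    | cons b t' =>
      rw [List.getLast?_cons_cons] at hf
      obtain ⟨hab, hc'⟩ := List.isChain_cons_cons.mp hc
      have := ih hc' (e := b) rfl hf
      rw [G.rank_tail a, hab, this]
      simp [List.length_cons]; ring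

theorem last_rank_zero {l : List G.E} (hc : l.Chain' (fun e f => G.head e = G.tail f))
    (hlen : ∀ e, l.head? = some e → G.rank (G.tail e) = l.length) :
    ∀ w, G.lastV l = some w → G.rank w = 0 := by
  intro w hw
  rw [lastV, Option.map_eq_some_iff] at hw
  obtain ⟨f, hf, rfl⟩ := hw
  have hne : l ≠ [] := by rintro rfl; simp at hf
  obtain ⟨e, he⟩ : ∃ e, l.head? = some e := by
    cases l with
    | nil => exact absurd rfl hne
    | cons a t => exact ⟨a, rfl⟩
  have := rank_first_last hc he hf
  have := hlen e he
  omega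

theorem star_path (hfull : G.EdgeFull) :
    ∀ (n : ℕ) (v : G.V), G.rank v = n →
      ∃ δ : List G.E, δ.Chain' (fun e f => G.head e = G.tail f) ∧ δ.length = n ∧
        (∀ e, δ.head? = some e → G.tail e = v) := by
  intro n
  induction n with
  | zero => exact fun v _ => ⟨[], List.isChain_nil, rfl, by simp⟩
  | succ n ih =>
    intro v hv
    obtain ⟨e, he⟩ := hfull v (by omega)
    have hr : G.rank (G.head e) = n := by have := G.rank_tail e; rw [he] at this; omega
    obtain ⟨δ, hc, hl, hh⟩ := ih (G.head e) hr
    refine ⟨e :: δ, List.isChain_cons.mpr ⟨fun y hy => (hh y hy).symm, hc⟩, by simp [hl], ?_⟩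
    intro f hf
    rw [List.head?_cons, Option.some.injEq] at hf
    subst hf; exact he

def quadSet (G : LayeredGraph) (F : Type) [Field F] : Set (FreeAlgebra F G.E) :=
  (↑(G.Rideal F ⊓ Submodule.span F
      (Set.range (FreeAlgebra.ι F : G.E → FreeAlgebra F G.E))) : Set (FreeAlgebra F G.E)) ∪
    {x | ∃ τ₁ τ₂ : List G.E, G.IsPathList τ₁ ∧ G.IsPathList τ₂ ∧
      τ₁.length = 2 ∧ τ₂.length = 2 ∧
      G.firstV τ₁ = G.firstV τ₂ ∧ G.lastV τ₁ = G.lastV τ₂ ∧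
      x = G.ecoef F τ₁ 2 - G.ecoef F τ₂ 2}

theorem gen_mem_Rideal {π₁ π₂ : List G.E} {k : ℕ} (h₁ : G.IsPathList π₁)
    (h₂ : G.IsPathList π₂) (hf : G.firstV π₁ = G.firstV π₂) (hl : G.lastV π₁ = G.lastV π₂)
    (hk1 : 1 ≤ k) (hk2 : k ≤ π₁.length) :
    G.ecoef F π₁ k - G.ecoef F π₂ k ∈ G.Rideal F :=
  tss_mem ⟨π₁, π₂, k, h₁, h₂, hf, hl, hk1, hk2, rfl⟩

theorem mem_quad_deg1 {x : FreeAlgebra F G.E} (h1 : x ∈ G.Rideal F)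
    (h2 : x ∈ Submodule.span F (Set.range (FreeAlgebra.ι F : G.E → FreeAlgebra F G.E))) :
    x ∈ twoSidedSpan F (quadSet G F) :=
  tss_mem (Set.mem_union_left _ (SetLike.mem_coe.mpr (Submodule.mem_inf.mpr ⟨h1, h2⟩)))

theorem ecoef_singleton_one (e : G.E) : G.ecoef F [e] 1 = -FreeAlgebra.ι F e := by
  have h := ecoef_cons (G := G) (F := F) e [] 0
  rw [zero_add] at h
  rw [h, ecoef_zero, mul_one, ecoef_eq_zero (by simp), zero_sub]

def Cond (G : LayeredGraph) (v a : G.V) (m : ℕ) (π : List G.E) : Prop :=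
  G.IsPathList π ∧ π.length = m ∧
    (∀ e, π.head? = some e → G.tail e = v ∧ G.head e = a) ∧
    (∀ w, G.lastV π = some w → G.rank w = 0)

def LstarStmt (G : LayeredGraph) (F : Type) [Field F] (m : ℕ) : Prop :=
  ∀ (π₁ π₂ : List G.E) (k : ℕ),
    G.IsPathList π₁ → G.IsPathList π₂ → π₁.length = m → π₂.length = m →
    G.firstV π₁ = G.firstV π₂ →
    (∀ w, G.lastV π₁ = some w → G.rank w = 0) →
    (∀ w, G.lastV π₂ = some w → G.rank w = 0) →
    1 ≤ k → G.ecoef F π₁ k - G.ecoef F π₂ k ∈ twoSidedSpan F (quadSet G F)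

theorem lastV_eq (hmin : G.HasUniqueMin) {l₁ l₂ : List G.E} (h1 : l₁ ≠ []) (h2 : l₂ ≠ [])
    (hr1 : ∀ w, G.lastV l₁ = some w → G.rank w = 0)
    (hr2 : ∀ w, G.lastV l₂ = some w → G.rank w = 0) : G.lastV l₁ = G.lastV l₂ := by
  obtain ⟨s, _, hs⟩ := hmin
  have e1 : G.lastV l₁ = some (G.head (l₁.getLast h1)) := by
    rw [lastV, List.getLast?_eq_getLast h1]; rfl
  have e2 : G.lastV l₂ = some (G.head (l₂.getLast h2)) := by
    rw [lastV, List.getLast?_eq_getLast h2]; rfl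
  rw [e1, e2, hs _ (hr1 _ e1), hs _ (hr2 _ e2)]

theorem cond_two {v a : G.V} {e₁ e₂ : G.E} {δ : List G.E} {m : ℕ}
    (h1 : G.tail e₁ = v) (h2 : G.head e₁ = a) (h3 : G.tail e₂ = a)
    (hδc : δ.Chain' (fun e f => G.head e = G.tail f))
    (hδh : ∀ y, δ.head? = some y → G.tail y = G.head e₂)
    (hδl : δ.length = G.rank (G.head e₂)) (hm : G.rank v = m) :
    Cond G v a m (e₁ :: e₂ :: δ) := by
  have hr2 : G.rank (G.head e₂) + 2 = m := by
    have q1 := G.rank_tail e₁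
    have q2 := G.rank_tail e₂
    rw [h1, h2] at q1
    rw [h3] at q2
    omega
  have hch : (e₁ :: e₂ :: δ).Chain' (fun e f => G.head e = G.tail f) :=
    List.isChain_cons_cons.mpr ⟨by rw [h2, h3], List.isChain_cons.mpr
      ⟨fun y hy => (hδh y (Option.mem_def.mp hy)).symm, hδc⟩⟩
  have hlen : (e₁ :: e₂ :: δ).length = m := by
    simp only [List.length_cons, hδl]; omega
  refine ⟨⟨by simp, hch⟩, hlen, ?_, ?_⟩
  · intro e he
    rw [List.head?_cons, Option.some.injEq] at he
    subst he
    exact ⟨h1, h2⟩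
  · refine last_rank_zero hch (fun e he => ?_) 
    rw [List.head?_cons, Option.some.injEq] at he
    subst he
    rw [h1, hm, hlen]

theorem build_path (hfull : G.EdgeFull) {v b : G.V} (hadj : G.adj v b) (hm : 2 ≤ G.rank v) :
    ∃ σ, Cond G v b (G.rank v) σ := by
  obtain ⟨g₁, hg₁t, hg₁h⟩ := hadj
  have hrb : G.rank b + 1 = G.rank v := by
    have h := G.rank_tail g₁
    rw [hg₁t, hg₁h] at h
    omega
  obtain ⟨g₂, hg₂⟩ := hfull b (by omega)
  obtain ⟨δ, hδc, hδl, hδh⟩ := star_path hfull (G.rank (G.head g₂)) (G.head g₂) rfl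
  exact ⟨g₁ :: g₂ :: δ, cond_two hg₁t hg₁h hg₂ hδc hδh hδl rfl⟩

theorem MID {a₁ a₂ b₁ b₂ : G.E} {δ : List G.E} (k : ℕ)
    (hta : G.tail a₁ = G.tail b₁) (hha : G.head a₂ = G.head b₂)
    (hca : G.head a₁ = G.tail a₂) (hcb : G.head b₁ = G.tail b₂)
    (hδc : δ.Chain' (fun e f => G.head e = G.tail f))
    (hδh : ∀ y, δ.head? = some y → G.tail y = G.head a₂) :
    G.ecoef F (a₁ :: a₂ :: δ) k - G.ecoef F (b₁ :: b₂ :: δ) k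
      ∈ twoSidedSpan F (quadSet G F) := by
  have e1 : (a₁ :: a₂ :: δ) = [a₁, a₂] ++ δ := rfl
  have e2 : (b₁ :: b₂ :: δ) = [b₁, b₂] ++ δ := rfl
  rw [e1, e2, ecoef_append, ecoef_append, ← Finset.sum_sub_distrib]
  refine Submodule.sum_mem _ (fun j _ => ?_)
  rw [← sub_mul]
  have hp1 : G.IsPathList [a₁, a₂] := ⟨by simp, List.isChain_pair.mpr hca⟩
  have hp2 : G.IsPathList [b₁, b₂] := ⟨by simp, List.isChain_pair.mpr hcb⟩
  have hfv : G.firstV [a₁, a₂] = G.firstV [b₁, b₂] := by simp [firstV, hta]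
  have hlv : G.lastV [a₁, a₂] = G.lastV [b₁, b₂] := by simp [lastV, hha]
  rcases j with _ | _ | _ | j
  · rw [ecoef_zero, ecoef_zero, sub_self, zero_mul]
    exact zero_mem _
  · exact tss_mul_right _ (mem_quad_deg1
      (gen_mem_Rideal hp1 hp2 hfv hlv le_rfl (by simp))
      (sub_mem (ecoef_one_mem _) (ecoef_one_mem _)))
  · exact tss_mul_right _ (tss_mem (Set.mem_union_right _
      ⟨[a₁, a₂], [b₁, b₂], hp1, hp2, rfl, rfl, hfv, hlv, rfl⟩))
  · rw [ecoef_eq_zero (show ([a₁,a₂] : List G.E).length < j + 3 by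
        simp only [List.length_cons, List.length_nil]; omega),
      ecoef_eq_zero (show ([b₁,b₂] : List G.E).length < j + 3 by
        simp only [List.length_cons, List.length_nil]; omega), sub_self, zero_mul]
    exact zero_mem _

theorem SA (hmin : G.HasUniqueMin) {m : ℕ} (hm : 2 ≤ m)
    (IH : LstarStmt G F (m - 1)) {v a : G.V} {π₁ π₂ : List G.E} {k : ℕ}
    (h₁ : Cond G v a m π₁) (h₂ : Cond G v a m π₂) (hk : 2 ≤ k) (hkm : k ≤ m) :
    G.ecoef F π₁ k - G.ecoef F π₂ k ∈ twoSidedSpan F (quadSet G F) := by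
  obtain ⟨⟨hne₁, hch₁⟩, hlen₁, hhead₁, hlast₁⟩ := h₁
  obtain ⟨⟨hne₂, hch₂⟩, hlen₂, hhead₂, hlast₂⟩ := h₂
  obtain ⟨e, g₁, t₁, rfl⟩ : ∃ e g t, π₁ = e :: g :: t := by
    cases π₁ with
    | nil => exact absurd rfl hne₁
    | cons e ρ =>
      cases ρ with
      | nil => simp only [List.length_cons, List.length_nil] at hlen₁; omega
      | cons g t => exact ⟨e, g, t, rfl⟩
  obtain ⟨f, g₂, t₂, rfl⟩ : ∃ f g t, π₂ = f :: g :: t := by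
    cases π₂ with
    | nil => exact absurd rfl hne₂
    | cons f ρ =>
      cases ρ with
      | nil => simp only [List.length_cons, List.length_nil] at hlen₂; omega
      | cons g t => exact ⟨f, g, t, rfl⟩
  obtain ⟨hv₁, ha₁⟩ := hhead₁ e rfl
  obtain ⟨hv₂, ha₂⟩ := hhead₂ f rfl
  obtain ⟨heg₁, hch₁'⟩ := List.isChain_cons_cons.mp hch₁
  obtain ⟨heg₂, hch₂'⟩ := List.isChain_cons_cons.mp hch₂
  have hlen₁' : (g₁ :: t₁).length = m - 1 := by
    simp only [List.length_cons] at hlen₁ ⊢; omega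
  have hlen₂' : (g₂ :: t₂).length = m - 1 := by
    simp only [List.length_cons] at hlen₂ ⊢; omega
  have hfirst : G.firstV (g₁ :: t₁) = G.firstV (g₂ :: t₂) := by
    simp only [firstV, List.head?_cons, Option.map_some]
    rw [← heg₁, ← heg₂, ha₁, ha₂]
  have hlast₁' : ∀ w, G.lastV (g₁ :: t₁) = some w → G.rank w = 0 := by
    intro w hw
    exact hlast₁ w (by rw [lastV, List.getLast?_cons_cons]; exact hw)
  have hlast₂' : ∀ w, G.lastV (g₂ :: t₂) = some w → G.rank w = 0 := by
    intro w hw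
    exact hlast₂ w (by rw [lastV, List.getLast?_cons_cons]; exact hw)
  have hpl₁ : G.IsPathList (g₁ :: t₁) := ⟨by simp, hch₁'⟩
  have hpl₂ : G.IsPathList (g₂ :: t₂) := ⟨by simp, hch₂'⟩
  obtain ⟨k', rfl⟩ : ∃ k', k = k' + 1 := ⟨k - 1, by omega⟩
  have T1 : G.ecoef F (g₁ :: t₁) (k' + 1) - G.ecoef F (g₂ :: t₂) (k' + 1)
      ∈ twoSidedSpan F (quadSet G F) := by
    by_cases hcm : k' + 1 = m
    · rw [ecoef_eq_zero (by omega), ecoef_eq_zero (by omega), sub_self]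
      exact zero_mem _
    · exact IH _ _ _ hpl₁ hpl₂ hlen₁' hlen₂' hfirst hlast₁' hlast₂' (by omega)
  have T2 : FreeAlgebra.ι F e * (G.ecoef F (g₁ :: t₁) k' - G.ecoef F (g₂ :: t₂) k')
      ∈ twoSidedSpan F (quadSet G F) :=
    tss_mul_left _ (IH _ _ _ hpl₁ hpl₂ hlen₁' hlen₂' hfirst hlast₁' hlast₂' (by omega))
  have hef : FreeAlgebra.ι F e - FreeAlgebra.ι F f
      = G.ecoef F [f] 1 - G.ecoef F [e] 1 := by
    rw [ecoef_singleton_one, ecoef_singleton_one]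
    abel
  have T3 : (FreeAlgebra.ι F e - FreeAlgebra.ι F f) * G.ecoef F (g₂ :: t₂) k'
      ∈ twoSidedSpan F (quadSet G F) := by
    refine tss_mul_right _ ?_
    rw [hef]
    refine mem_quad_deg1 (gen_mem_Rideal ⟨by simp, List.isChain_singleton f⟩
      ⟨by simp, List.isChain_singleton e⟩ ?_ ?_ le_rfl (by simp)) ?_
    · simp only [firstV, List.head?_cons, Option.map_some]
      rw [hv₁, hv₂]
    · simp only [lastV, List.getLast?_singleton, Option.map_some]
      rw [ha₁, ha₂]
    · exact sub_mem (ecoef_one_mem _) (ecoef_one_mem _)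
  have key : G.ecoef F (e :: g₁ :: t₁) (k' + 1) - G.ecoef F (f :: g₂ :: t₂) (k' + 1)
      = (G.ecoef F (g₁ :: t₁) (k' + 1) - G.ecoef F (g₂ :: t₂) (k' + 1))
        - FreeAlgebra.ι F e * (G.ecoef F (g₁ :: t₁) k' - G.ecoef F (g₂ :: t₂) k')
        - (FreeAlgebra.ι F e - FreeAlgebra.ι F f) * G.ecoef F (g₂ :: t₂) k' := by
    rw [ecoef_cons e (g₁ :: t₁) k', ecoef_cons f (g₂ :: t₂) k']
    simp only [mul_sub, sub_mul]
    abel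
  rw [key]
  exact sub_mem (sub_mem T1 T2) T3

theorem Lstar (hu : G.Uniform) (hmin : G.HasUniqueMin) (hfull : G.EdgeFull) :
    ∀ m : ℕ, LstarStmt G F m := by
  intro m
  induction m using Nat.strong_induction_on with
  | _ m IH =>
  intro π₁ π₂ k hp₁ hp₂ hl₁ hl₂ hf hr₁ hr₂ hk1
  by_cases hkm : m < k
  · rw [ecoef_eq_zero (by omega), ecoef_eq_zero (by omega), sub_self]
    exact zero_mem _
  push_neg at hkm
  rcases eq_or_lt_of_le hk1 with hk1' | hk2
  · rw [← hk1']
    exact mem_quad_deg1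
      (gen_mem_Rideal hp₁ hp₂ hf (lastV_eq hmin hp₁.1 hp₂.1 hr₁ hr₂) le_rfl (by omega))
      (sub_mem (ecoef_one_mem _) (ecoef_one_mem _))
  have hk2' : 2 ≤ k := hk2
  have hm2 : 2 ≤ m := le_trans hk2' hkm
  have hIH : LstarStmt G F (m - 1) := IH (m - 1) (by omega)
  obtain ⟨e, ρ₁, rfl⟩ : ∃ e ρ, π₁ = e :: ρ := by
    cases π₁ with
    | nil => exact absurd rfl hp₁.1
    | cons e ρ => exact ⟨e, ρ, rfl⟩
  obtain ⟨f, ρ₂, rfl⟩ : ∃ f ρ, π₂ = f :: ρ := by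
    cases π₂ with
    | nil => exact absurd rfl hp₂.1
    | cons f ρ => exact ⟨f, ρ, rfl⟩
  have hvf : G.tail f = G.tail e := by
    simp only [firstV, List.head?_cons, Option.map_some, Option.some.injEq] at hf
    exact hf.symm
  have hrankv : G.rank (G.tail e) = m := by
    obtain ⟨g, hg⟩ : ∃ g, (e :: ρ₁).getLast? = some g :=
      ⟨(e :: ρ₁).getLast (by simp), List.getLast?_eq_getLast (by simp)⟩
    have h1 := rank_first_last hp₁.2 (e := e) rfl hg
    have h2 := hr₁ (G.head g) (by rw [lastV, hg]; rfl)
    omega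
  have hc₁ : Cond G (G.tail e) (G.head e) m (e :: ρ₁) := by
    refine ⟨hp₁, hl₁, ?_, hr₁⟩
    intro e' he'
    rw [List.head?_cons, Option.some.injEq] at he'
    subst he'
    exact ⟨rfl, rfl⟩
  have hc₂ : Cond G (G.tail e) (G.head f) m (f :: ρ₂) := by
    refine ⟨hp₂, hl₂, ?_, hr₂⟩
    intro f' hf'
    rw [List.head?_cons, Option.some.injEq] at hf'
    subst hf'
    exact ⟨hvf, rfl⟩
  have heqv := hu (G.tail e) (G.head e) (G.head f) (by omega) ⟨e, rfl, rfl⟩ ⟨f, hvf, rfl⟩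
  have hC : ∀ a b, Relation.EqvGen
      (fun a b => G.adj (G.tail e) a ∧ G.adj (G.tail e) b ∧
        ∃ x, G.adj a x ∧ G.adj b x) a b →
      a = b ∨ (G.adj (G.tail e) a ∧ G.adj (G.tail e) b ∧
        ∀ σ₁ σ₂, Cond G (G.tail e) a m σ₁ → Cond G (G.tail e) b m σ₂ →
          G.ecoef F σ₁ k - G.ecoef F σ₂ k ∈ twoSidedSpan F (quadSet G F)) := by
    intro a b h
    induction h with
    | rel a b hab =>
      obtain ⟨ha, hb, x, hax, hbx⟩ := hab
      right
      refine ⟨ha, hb, fun σ₁ σ₂ hσ₁ hσ₂ => ?_⟩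
      obtain ⟨e₁, he₁t, he₁h⟩ := ha
      obtain ⟨f₁, hf₁t, hf₁h⟩ := hb
      obtain ⟨e₂, he₂t, he₂h⟩ := hax
      obtain ⟨f₂, hf₂t, hf₂h⟩ := hbx
      obtain ⟨δ, hδc, hδl, hδh⟩ := star_path hfull (G.rank x) x rfl
      have hca : Cond G (G.tail e) a m (e₁ :: e₂ :: δ) :=
        cond_two he₁t he₁h he₂t hδc
          (fun y hy => by rw [hδh y hy, he₂h]) (by rw [he₂h]; exact hδl) hrankv
      have hcb : Cond G (G.tail e) b m (f₁ :: f₂ :: δ) :=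
        cond_two hf₁t hf₁h hf₂t hδc
          (fun y hy => by rw [hδh y hy, hf₂h]) (by rw [hf₂h]; exact hδl) hrankv
      have hmid := MID (G := G) (F := F) (a₁ := e₁) (a₂ := e₂) (b₁ := f₁) (b₂ := f₂) (δ := δ) k (by rw [he₁t, hf₁t]) (by rw [he₂h, hf₂h])
        (by rw [he₁h, he₂t]) (by rw [hf₁h, hf₂t]) hδc
        (fun y hy => by rw [hδh y hy, he₂h])
      have h1 := SA hmin hm2 hIH hσ₁ hca hk2' hkm
      have h3 := SA hmin hm2 hIH hcb hσ₂ hk2' hkm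
      have := add_mem (add_mem h1 hmid) h3
      rwa [sub_add_sub_cancel, sub_add_sub_cancel] at this
    | refl a => exact Or.inl rfl
    | symm a b _ ih =>
      rcases ih with rfl | ⟨h1, h2, D⟩
      · exact Or.inl rfl
      · refine Or.inr ⟨h2, h1, fun σ₁ σ₂ hσ₁ hσ₂ => ?_⟩
        have hD := neg_mem (D σ₂ σ₁ hσ₂ hσ₁)
        rwa [neg_sub] at hD
    | trans a b c _ _ ih₁ ih₂ =>
      rcases ih₁ with rfl | ⟨ha, hb, D₁⟩
      · exact ih₂
      rcases ih₂ with rfl | ⟨hb', hc, D₂⟩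
      · exact Or.inr ⟨ha, hb, D₁⟩
      right
      refine ⟨ha, hc, fun σ₁ σ₂ hσ₁ hσ₂ => ?_⟩
      obtain ⟨σb, hσb⟩ := build_path hfull hb (by omega)
      rw [hrankv] at hσb
      have h1 := D₁ σ₁ σb hσ₁ hσb
      have h2 := D₂ σb σ₂ hσb hσ₂
      have := add_mem h1 h2
      rwa [sub_add_sub_cancel] at this
  rcases hC _ _ heqv with heq | ⟨_, _, D⟩
  · rw [heq] at hc₁
    exact SA hmin hm2 hIH hc₁ hc₂ hk2' hkm
  · exact D _ _ hc₁ hc₂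

theorem forward_gen (hu : G.Uniform) (hmin : G.HasUniqueMin) (hfull : G.EdgeFull)
    {π₁ π₂ : List G.E} (hp₁ : G.IsPathList π₁) (hp₂ : G.IsPathList π₂)
    (hf : G.firstV π₁ = G.firstV π₂) (hl : G.lastV π₁ = G.lastV π₂) :
    ∀ k, 1 ≤ k → G.ecoef F π₁ k - G.ecoef F π₂ k ∈ twoSidedSpan F (quadSet G F) := by
  obtain ⟨e₁, t₁, rfl⟩ : ∃ e t, π₁ = e :: t := by
    cases π₁ with
    | nil => exact absurd rfl hp₁.1
    | cons e ρ => exact ⟨e, ρ, rfl⟩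
  obtain ⟨e₂, t₂, rfl⟩ : ∃ e t, π₂ = e :: t := by
    cases π₂ with
    | nil => exact absurd rfl hp₂.1
    | cons e ρ => exact ⟨e, ρ, rfl⟩
  obtain ⟨g₁, hg₁⟩ : ∃ g, (e₁ :: t₁).getLast? = some g :=
    ⟨(e₁ :: t₁).getLast (by simp), List.getLast?_eq_getLast (by simp)⟩
  obtain ⟨g₂, hg₂⟩ : ∃ g, (e₂ :: t₂).getLast? = some g :=
    ⟨(e₂ :: t₂).getLast (by simp), List.getLast?_eq_getLast (by simp)⟩
  have hte : G.tail e₂ = G.tail e₁ := by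
    simp only [firstV, List.head?_cons, Option.map_some, Option.some.injEq] at hf
    exact hf.symm
  have hhg : G.head g₂ = G.head g₁ := by
    rw [lastV, lastV, hg₁, hg₂, Option.map_some, Option.map_some,
      Option.some.injEq] at hl
    exact hl.symm
  have hr1 := rank_first_last hp₁.2 (e := e₁) rfl hg₁
  have hr2 := rank_first_last hp₂.2 (e := e₂) rfl hg₂
  rw [hte, hhg] at hr2
  have hlen2 : (e₂ :: t₂).length = (e₁ :: t₁).length := by omega
  intro k
  induction k using Nat.strong_induction_on with
  | _ k IHk =>
  intro hk1
  by_cases hkn : (e₁ :: t₁).length < k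
  · rw [ecoef_eq_zero (by omega), ecoef_eq_zero (by omega), sub_self]
    exact zero_mem _
  by_cases hw0 : G.rank (G.head g₁) = 0
  · refine Lstar hu hmin hfull ((e₁ :: t₁).length) (e₁ :: t₁) (e₂ :: t₂) k hp₁ hp₂ rfl
      hlen2 hf ?_ ?_ hk1
    · intro w' hw'
      rw [lastV, hg₁, Option.map_some, Option.some.injEq] at hw'
      rw [← hw']
      exact hw0
    · intro w' hw'
      rw [lastV, hg₂, Option.map_some, Option.some.injEq] at hw'
      rw [← hw', hhg]
      exact hw0
  obtain ⟨δ, hδc, hδl, hδh⟩ := star_path hfull (G.rank (G.head g₁)) (G.head g₁) rfl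
  have hch1 : ((e₁ :: t₁) ++ δ).Chain' (fun e f => G.head e = G.tail f) := by
    refine List.IsChain.append hp₁.2 hδc ?_
    intro x hx y hy
    have hx' : x = g₁ := by
      rw [Option.mem_def, hg₁, Option.some.injEq] at hx
      exact hx.symm
    rw [hx', (hδh y (Option.mem_def.mp hy))]
  have hch2 : ((e₂ :: t₂) ++ δ).Chain' (fun e f => G.head e = G.tail f) := by
    refine List.IsChain.append hp₂.2 hδc ?_
    intro x hx y hy
    have hx' : x = g₂ := by
      rw [Option.mem_def, hg₂, Option.some.injEq] at hx
      exact hx.symm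
    rw [hx', (hδh y (Option.mem_def.mp hy)), hhg]
  have hLs : G.ecoef F ((e₁ :: t₁) ++ δ) k - G.ecoef F ((e₂ :: t₂) ++ δ) k
      ∈ twoSidedSpan F (quadSet G F) := by
    refine Lstar hu hmin hfull ((e₁ :: t₁).length + G.rank (G.head g₁))
      ((e₁ :: t₁) ++ δ) ((e₂ :: t₂) ++ δ) k ⟨by simp, hch1⟩ ⟨by simp, hch2⟩
      (by rw [List.length_append, hδl]) (by rw [List.length_append, hδl, hlen2]) ?_ ?_ ?_ hk1
    · simp only [List.cons_append, firstV, List.head?_cons, Option.map_some,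
        Option.some.injEq]
      exact hte.symm
    · refine last_rank_zero hch1 (fun y hy => ?_) 
      rw [List.cons_append, List.head?_cons, Option.some.injEq] at hy
      subst hy
      rw [List.length_append]
      omega
    · refine last_rank_zero hch2 (fun y hy => ?_) 
      rw [List.cons_append, List.head?_cons, Option.some.injEq] at hy
      subst hy
      rw [List.length_append, hte]
      omega
  have hsum : G.ecoef F ((e₁ :: t₁) ++ δ) k - G.ecoef F ((e₂ :: t₂) ++ δ) k
      = ∑ j ∈ Finset.range (k + 1),
          (G.ecoef F (e₁ :: t₁) j - G.ecoef F (e₂ :: t₂) j) * G.ecoef F δ (k - j) := by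
    rw [ecoef_append, ecoef_append, ← Finset.sum_sub_distrib]
    exact Finset.sum_congr rfl (fun j _ => (sub_mul _ _ _).symm)
  rw [Finset.sum_range_succ, Nat.sub_self, ecoef_zero, mul_one] at hsum
  have key : G.ecoef F (e₁ :: t₁) k - G.ecoef F (e₂ :: t₂) k
      = (G.ecoef F ((e₁ :: t₁) ++ δ) k - G.ecoef F ((e₂ :: t₂) ++ δ) k)
        - ∑ j ∈ Finset.range k,
            (G.ecoef F (e₁ :: t₁) j - G.ecoef F (e₂ :: t₂) j) * G.ecoef F δ (k - j) := by
    rw [hsum]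
    abel
  rw [key]
  refine sub_mem hLs (Submodule.sum_mem _ (fun j hj => ?_))
  rcases Nat.eq_zero_or_pos j with rfl | hj1
  · rw [ecoef_zero, ecoef_zero, sub_self, zero_mul]
    exact zero_mem _
  · exact tss_mul_right _ (IHk j (Finset.mem_range.mp hj) hj1)

theorem backward : twoSidedSpan F (quadSet G F) ≤ G.Rideal F := by
  refine tss_le (fun a b x hx => tss_mul_mem a b hx) ?_
  rintro s hs
  rcases hs with hs | ⟨τ₁, τ₂, h₁, h₂, hl1, hl2, hfv, hlv, rfl⟩
  · exact (Submodule.mem_inf.mp hs).1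
  · exact tss_mem ⟨τ₁, τ₂, 2, h₁, h₂, hfv, hlv, one_le_two, by omega, rfl⟩

theorem forward (hu : G.Uniform) (hmin : G.HasUniqueMin) (hfull : G.EdgeFull) :
    G.Rideal F ≤ twoSidedSpan F (quadSet G F) := by
  refine tss_le (fun a b x hx => tss_mul_mem a b hx) ?_
  rintro s ⟨π₁, π₂, k, h₁, h₂, hfv, hlv, hk1, hk2, rfl⟩
  exact forward_gen hu hmin hfull h₁ h₂ hfv hlv k hk1

end LGAux
end

/-- Lemma 3.4: if `Γ` is a uniform layered graph with unique minimal
vertex, then the defining ideal `R` of `A(Γ)` is generated by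
`R₁ ∪ {e(τ₁,2) - e(τ₂,2) : t(τ₁)=t(τ₂), h(τ₁)=h(τ₂), l(τ₁)=l(τ₂)=2}`;
in particular `R` is generated in degrees `≤ 2` and `A(Γ)` is quadratic. -/
theorem Rideal_quadratic_generation (G : LayeredGraph) (F : Type) [Field F]
    (hu : G.Uniform) (hmin : G.HasUniqueMin) (hfull : G.EdgeFull) :
    G.Rideal F = LayeredGraph.twoSidedSpan F
      ((↑(G.Rideal F ⊓ Submodule.span F
          (Set.range (FreeAlgebra.ι F : G.E → FreeAlgebra F G.E))) : Set (FreeAlgebra F G.E)) ∪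
        {x | ∃ τ₁ τ₂ : List G.E, G.IsPathList τ₁ ∧ G.IsPathList τ₂ ∧
          τ₁.length = 2 ∧ τ₂.length = 2 ∧
          G.firstV τ₁ = G.firstV τ₂ ∧ G.lastV τ₁ = G.lastV τ₂ ∧
          x = G.ecoef F τ₁ 2 - G.ecoef F τ₂ 2}) := by
  exact le_antisymm (LGAux.forward hu hmin hfull) LGAux.backward
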